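/- arXiv:1405.5192 — 5 statements merged into one kernel-verified Lean document; each statement's English description precedes it below -/
import Mathlib

section
/- Let n ≥ 2 and let r be a real number with 0 < r. For any real numbers h₁, ..., hₙ (interpreted as diagonal entries of a shape operator), the quantity ((n²+n(r-1)-2r)/r)·∑_{i=1}^{n-1} hᵢ² + (r/n)·hₙ² - 2·∑_{i<j} hᵢhⱼ is nonnegative, with equality if and only if h₁ = h₂ = ... = h_{n-1} and hₙ = (n(n-1)/r)·h₁. -/
open Finset

lemma doubleSumAux (h : ℕ → ℝ) (n : ℕ) :
    2 * ∑ i ∈ Finset.range n, ∑ j ∈ Finset.range n, (if i < j then h i * h j else 0)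
      = (∑ i ∈ Finset.range n, h i)^2 - ∑ i ∈ Finset.range n, (h i)^2 := by
  induction n with
  | zero => simp
  | succ n ih =>
    have step : ∑ i ∈ Finset.range (n+1), ∑ j ∈ Finset.range (n+1),
          (if i < j then h i * h j else 0)
        = (∑ i ∈ Finset.range n, ∑ j ∈ Finset.range n, (if i < j then h i * h j else 0))
          + (∑ i ∈ Finset.range n, h i) * h n := by
      rw [Finset.sum_range_succ]
      have hz : ∑ j ∈ Finset.range (n+1), (if n < j then h n * h j else 0) = 0 := by
        apply Finset.sum_eq_zero
        intro j hj
        rw [if_neg]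
        have := Finset.mem_range.mp hj
        omega
      rw [hz, add_zero]
      rw [Finset.sum_congr rfl (fun i _ => Finset.sum_range_succ
        (fun j => if i < j then h i * h j else 0) n)]
      rw [Finset.sum_add_distrib]
      congr 1
      rw [Finset.sum_mul]
      apply Finset.sum_congr rfl
      intro i hi
      rw [if_pos (Finset.mem_range.mp hi)]
    rw [step, mul_add, ih, Finset.sum_range_succ, Finset.sum_range_succ]
    ring

/-- the diagonal quadratic form from the Casorati polynomial is
nonnegative, with equality iff `h₁ = ... = h_{n-1}` and `hₙ = (n(n-1)/r)·h₁`. -/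
theorem stmt0 (n : ℕ) (hn : 2 ≤ n) (r : ℝ) (hr : 0 < r) (h : ℕ → ℝ) :
    0 ≤ (((n : ℝ)^2 + (n : ℝ)*(r-1) - 2*r)/r) * ∑ i ∈ Finset.range (n-1), (h i)^2
        + (r/(n : ℝ)) * (h (n-1))^2
        - 2 * ∑ i ∈ Finset.range n, ∑ j ∈ Finset.range n,
            (if i < j then h i * h j else 0)
    ∧ ((((n : ℝ)^2 + (n : ℝ)*(r-1) - 2*r)/r) * ∑ i ∈ Finset.range (n-1), (h i)^2
        + (r/(n : ℝ)) * (h (n-1))^2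
        - 2 * ∑ i ∈ Finset.range n, ∑ j ∈ Finset.range n,
            (if i < j then h i * h j else 0) = 0
      ↔ (∀ i < n - 1, h i = h 0) ∧ h (n-1) = ((n : ℝ)*((n : ℝ)-1)/r) * h 0) := by
  obtain ⟨m, rfl⟩ : ∃ m, n = m + 1 := ⟨n - 1, by omega⟩
  have hm : 1 ≤ m := by omega
  set S : ℝ := ∑ i ∈ Finset.range m, h i with hS
  set Q : ℝ := ∑ i ∈ Finset.range m, (h i)^2 with hQ
  set t : ℝ := h m with ht
  have hmR : (0:ℝ) < (m:ℝ) := by exact_mod_cast hm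
  have hnR : (0:ℝ) < ((m:ℝ) + 1) := by linarith
  -- expansion of W
  set W : ℝ := ∑ i ∈ Finset.range m, ((m:ℝ) * h i - S)^2 with hWdef
  have hW : W = (m:ℝ)^2 * Q - (m:ℝ) * S^2 := by
    have e : ∀ i ∈ Finset.range m,
        ((m:ℝ) * h i - S)^2 = (m:ℝ)^2 * (h i)^2 - (2*(m:ℝ)*S) * (h i) + S^2 := by
      intro i _; ring
    rw [hWdef, Finset.sum_congr rfl e, Finset.sum_add_distrib, Finset.sum_sub_distrib,
      ← Finset.mul_sum, ← Finset.mul_sum, Finset.sum_const, Finset.card_range,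
      nsmul_eq_mul, ← hS, ← hQ]
    ring
  have ds := doubleSumAux h (m+1)
  rw [Finset.sum_range_succ (fun i => h i) m, Finset.sum_range_succ (fun i => (h i)^2) m,
    ← hS, ← hQ, ← ht] at ds
  have hds : ∑ i ∈ Finset.range (m+1), ∑ j ∈ Finset.range (m+1),
      (if i < j then h i * h j else 0) = ((S + t)^2 - (Q + t^2)) / 2 := by
    linarith
  have hsimp : m + 1 - 1 = m := by omega
  set E : ℝ := ((((m:ℕ)+1 : ℕ) : ℝ)^2 + (((m:ℕ)+1 : ℕ) : ℝ)*(r-1) - 2*r)/r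
      * ∑ i ∈ Finset.range (m+1-1), (h i)^2
      + (r/(((m:ℕ)+1 : ℕ) : ℝ)) * (h (m+1-1))^2
      - 2 * ∑ i ∈ Finset.range (m+1), ∑ j ∈ Finset.range (m+1),
          (if i < j then h i * h j else 0) with hE
  have key : E = (((m:ℝ)+1) + r)/(r*(m:ℝ)) * W + (1/(r*((m:ℝ)+1)))
      * ((((m:ℝ)+1)*S - r*t))^2 := by
    rw [hE, hds, hsimp, hW, ← hQ, ← ht]
    push_cast
    field_simp
    ring
  have hc1 : 0 < (((m:ℝ)+1) + r)/(r*(m:ℝ)) := by positivity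
  have hc2 : 0 < 1/(r*((m:ℝ)+1)) := by positivity
  have hWnn : 0 ≤ W := Finset.sum_nonneg fun i _ => sq_nonneg _
  have hT1 : 0 ≤ (((m:ℝ)+1) + r)/(r*(m:ℝ)) * W := mul_nonneg hc1.le hWnn
  have hT2 : 0 ≤ (1/(r*((m:ℝ)+1))) * ((((m:ℝ)+1)*S - r*t))^2 :=
    mul_nonneg hc2.le (sq_nonneg _)
  constructor
  · rw [key]; linarith
  · have hEiff : E = 0 ↔ W = 0 ∧ ((m:ℝ)+1)*S - r*t = 0 := by
      rw [key]
      constructor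
      · intro hz
        have h1 : (((m:ℝ)+1) + r)/(r*(m:ℝ)) * W = 0 := by linarith
        have h2 : (1/(r*((m:ℝ)+1))) * ((((m:ℝ)+1)*S - r*t))^2 = 0 := by linarith
        constructor
        · rcases mul_eq_zero.mp h1 with hc | hw
          · exact absurd hc hc1.ne'
          · exact hw
        · rcases mul_eq_zero.mp h2 with hc | hw
          · exact absurd hc hc2.ne'
          · exact pow_eq_zero_iff (by norm_num) |>.mp hw
      · rintro ⟨h1, h2⟩
        rw [h1, h2]
        ring
    have hWiff : W = 0 ↔ ∀ i < m, h i = h 0 := by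
      rw [hWdef]
      rw [Finset.sum_eq_zero_iff_of_nonneg (fun i _ => sq_nonneg _)]
      constructor
      · intro hz i hi
        have hi' := hz i (Finset.mem_range.mpr hi)
        have h0' := hz 0 (Finset.mem_range.mpr (by omega))
        have e1 : (m:ℝ) * h i = S := by
          have := pow_eq_zero_iff (n := 2) (by norm_num) |>.mp hi'
          linarith [sub_eq_zero.mp this]
        have e2 : (m:ℝ) * h 0 = S := by
          have := pow_eq_zero_iff (n := 2) (by norm_num) |>.mp h0'
          linarith [sub_eq_zero.mp this]
        have : (m:ℝ) * h i = (m:ℝ) * h 0 := by linarith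
        exact mul_left_cancel₀ hmR.ne' this
      · intro hall i hi
        have hi' := Finset.mem_range.mp hi
        have hSval : S = (m:ℝ) * h 0 := by
          rw [hS]
          rw [Finset.sum_congr rfl (fun j hj => hall j (Finset.mem_range.mp hj))]
          rw [Finset.sum_const, Finset.card_range, nsmul_eq_mul]
        rw [hall i hi', hSval]
        ring
    simp only [hsimp]
    rw [hEiff, hWiff]
    constructor
    · rintro ⟨h1, h2⟩
      refine ⟨h1, ?_⟩
      have hSval : S = (m:ℝ) * h 0 := by
        rw [hS, Finset.sum_congr rfl (fun j hj => h1 j (Finset.mem_range.mp hj)),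
          Finset.sum_const, Finset.card_range, nsmul_eq_mul]
      rw [hSval] at h2
      rw [← ht]
      push_cast
      field_simp
      linarith
    · rintro ⟨h1, h2⟩
      refine ⟨h1, ?_⟩
      have hSval : S = (m:ℝ) * h 0 := by
        rw [hS, Finset.sum_congr rfl (fun j hj => h1 j (Finset.mem_range.mp hj)),
          Finset.sum_const, Finset.card_range, nsmul_eq_mul]
      rw [← ht] at h2
      push_cast at h2
      rw [hSval, h2]
      field_simp
      ring
end

section
/- Let n ≥ 2 be an integer and r > 0 a real number. Define the quadratic polynomial 𝒫 in real variables h_{ij} (1 ≤ i ≤ j ≤ n) by 𝒫 = ((n+r)/n)·∑_{i,j=1}^{n} h_{ij}² + ((n+r)(n²-n-r)/(rn))·∑_{i,j=1}^{n-1} h_{ij}² − (∑_{i=1}^{n} h_{ii})², where h_{ij} = h_{ji}. Then 𝒫 ≥ 0, with equality if and only if h_{ij} = 0 for all i ≠ j and h_{nn} = (n(n-1)/r)·h_{11} = ... = (n(n-1)/r)·h_{n-1,n-1}. -/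
open Finset

lemma double_sum_split (N : ℕ) (f : ℕ → ℕ → ℝ) :
    ∑ i ∈ Finset.range N, ∑ j ∈ Finset.range N, f i j
      = ∑ i ∈ Finset.range N, f i i
        + ∑ i ∈ Finset.range N, ∑ j ∈ (Finset.range N).erase i, f i j := by
  rw [← Finset.sum_add_distrib]
  exact Finset.sum_congr rfl fun i hi => (Finset.add_sum_erase _ _ hi).symm

lemma sum_sq_diff (M : ℕ) (x : ℕ → ℝ) :
    ∑ i ∈ Finset.range M, ∑ j ∈ Finset.range M, (x i - x j)^2
      = 2*(M:ℝ)*(∑ i ∈ Finset.range M, (x i)^2) - 2*(∑ i ∈ Finset.range M, x i)^2 := by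
  have h : ∀ i j : ℕ, (x i - x j)^2 = (x i)^2 + (x j)^2 - 2*(x i * x j) := fun i j => by ring
  simp_rw [h, Finset.sum_sub_distrib, Finset.sum_add_distrib, Finset.sum_const,
    Finset.card_range, nsmul_eq_mul, ← Finset.mul_sum, ← Finset.sum_mul, sq]
  ring

lemma sum_sq_aff (M : ℕ) (y k : ℝ) (x : ℕ → ℝ) :
    ∑ i ∈ Finset.range M, (y - k * x i)^2
      = (M:ℝ)*y^2 - 2*k*y*(∑ i ∈ Finset.range M, x i)
        + k^2*(∑ i ∈ Finset.range M, (x i)^2) := by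
  have h : ∀ i : ℕ, (y - k * x i)^2 = y^2 - 2*k*y*(x i) + k^2*(x i)^2 := fun i => by ring
  simp_rw [h, Finset.sum_add_distrib, Finset.sum_sub_distrib, Finset.sum_const,
    Finset.card_range, nsmul_eq_mul, ← Finset.mul_sum]

/-- the quadratic polynomial 𝒫 of the proof of the generalized
Casorati inequality is nonnegative, with the stated equality characterization. -/
theorem stmt1 (n : ℕ) (hn : 2 ≤ n) (r : ℝ) (hr : 0 < r) (h : ℕ → ℕ → ℝ)
    (hsymm : ∀ i j, h i j = h j i) :
    0 ≤ (((n : ℝ)+r)/(n : ℝ)) * ∑ i ∈ Finset.range n, ∑ j ∈ Finset.range n, (h i j)^2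
        + (((n : ℝ)+r)*((n : ℝ)^2 - (n : ℝ) - r)/(r*(n : ℝ))) *
            ∑ i ∈ Finset.range (n-1), ∑ j ∈ Finset.range (n-1), (h i j)^2
        - (∑ i ∈ Finset.range n, h i i)^2
    ∧ ((((n : ℝ)+r)/(n : ℝ)) * ∑ i ∈ Finset.range n, ∑ j ∈ Finset.range n, (h i j)^2
        + (((n : ℝ)+r)*((n : ℝ)^2 - (n : ℝ) - r)/(r*(n : ℝ))) *
            ∑ i ∈ Finset.range (n-1), ∑ j ∈ Finset.range (n-1), (h i j)^2
        - (∑ i ∈ Finset.range n, h i i)^2 = 0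
      ↔ (∀ i < n, ∀ j < n, i ≠ j → h i j = 0)
        ∧ ∀ i < n - 1, h (n-1) (n-1) = ((n : ℝ)*((n : ℝ)-1)/r) * h i i) := by
  set m := n - 1 with hmdef
  have hnm : n = m + 1 := by omega
  have hnpos : (0:ℝ) < (n:ℝ) := by exact_mod_cast (by omega : 0 < n)
  have hn0 : (n:ℝ) ≠ 0 := ne_of_gt hnpos
  have hcast : (m:ℝ) = (n:ℝ) - 1 := by rw [hnm]; push_cast; ring
  have hm1 : (1:ℝ) ≤ (m:ℝ) := by exact_mod_cast (by omega : 1 ≤ m)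
  have hn1pos : (0:ℝ) < (n:ℝ) - 1 := by rw [← hcast]; linarith
  have hn1 : (n:ℝ) - 1 ≠ 0 := ne_of_gt hn1pos
  have hr0 : r ≠ 0 := ne_of_gt hr
  -- abbreviations
  set a : ℝ := ((n : ℝ)+r)/(n : ℝ) with ha_def
  set b : ℝ := ((n : ℝ)+r)*((n : ℝ)^2 - (n : ℝ) - r)/(r*(n : ℝ)) with hb_def
  set k : ℝ := (n : ℝ)*((n : ℝ)-1)/r with hk_def
  set Q : ℝ := ∑ i ∈ Finset.range m, (h i i)^2 with hQ_def
  set T : ℝ := ∑ i ∈ Finset.range m, h i i with hT_def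
  set On : ℝ := ∑ i ∈ Finset.range n, ∑ j ∈ (Finset.range n).erase i, (h i j)^2 with hOn_def
  set Om : ℝ := ∑ i ∈ Finset.range m, ∑ j ∈ (Finset.range m).erase i, (h i j)^2 with hOm_def
  set S1 : ℝ := ∑ i ∈ Finset.range m, ∑ j ∈ Finset.range m, (h i i - h j j)^2 with hS1_def
  set S2 : ℝ := ∑ i ∈ Finset.range m, (h m m - k * h i i)^2 with hS2_def
  -- positivity of coefficients
  have ha : 0 < a := by rw [ha_def]; positivity
  have hab : 0 < a + b := by
    have : a + b = ((n:ℝ)+r)*((n:ℝ)-1)/r := by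
      rw [ha_def, hb_def]; field_simp; ring
    rw [this]; positivity
  have hk0 : 0 < k := by rw [hk_def]; positivity
  have hd : (0:ℝ) < r/((n:ℝ)*((n:ℝ)-1)) := by positivity
  -- sum decompositions
  have hDn : ∑ i ∈ Finset.range n, (h i i)^2 = Q + (h m m)^2 := by
    rw [hnm, Finset.sum_range_succ]
  have hTr : ∑ i ∈ Finset.range n, h i i = T + h m m := by
    rw [hnm, Finset.sum_range_succ]
  have hSn : ∑ i ∈ Finset.range n, ∑ j ∈ Finset.range n, (h i j)^2
      = (Q + (h m m)^2) + On := by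
    rw [double_sum_split, hDn]
  have hSm : ∑ i ∈ Finset.range m, ∑ j ∈ Finset.range m, (h i j)^2 = Q + Om := by
    rw [double_sum_split]
  have hS1e : S1 = 2*(m:ℝ)*Q - 2*T^2 := sum_sq_diff m (fun i => h i i)
  have hS2e : S2 = (m:ℝ)*(h m m)^2 - 2*k*(h m m)*T + k^2*Q :=
    sum_sq_aff m (h m m) k (fun i => h i i)
  -- the key algebraic identity
  have key : a * (∑ i ∈ Finset.range n, ∑ j ∈ Finset.range n, (h i j)^2)
        + b * (∑ i ∈ Finset.range m, ∑ j ∈ Finset.range m, (h i j)^2)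
        - (∑ i ∈ Finset.range n, h i i)^2
      = a * (On - Om) + (a + b) * Om + (1/2) * S1 + (r/((n:ℝ)*((n:ℝ)-1))) * S2 := by
    rw [hSn, hSm, hTr, hS1e, hS2e, ha_def, hb_def, hk_def, hcast]
    field_simp
    ring
  -- nonnegativity helpers
  have hOm_nonneg : 0 ≤ Om := by
    apply Finset.sum_nonneg; intro i _; apply Finset.sum_nonneg; intro j _; positivity
  have hOmOn : Om ≤ On := by
    rw [hOn_def, hOm_def]
    calc ∑ i ∈ Finset.range m, ∑ j ∈ (Finset.range m).erase i, (h i j)^2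
        ≤ ∑ i ∈ Finset.range m, ∑ j ∈ (Finset.range n).erase i, (h i j)^2 := by
          apply Finset.sum_le_sum; intro i _
          apply Finset.sum_le_sum_of_subset_of_nonneg
          · exact Finset.erase_subset_erase _ (Finset.range_subset_range.2 (by omega))
          · intro j _ _; positivity
      _ ≤ ∑ i ∈ Finset.range n, ∑ j ∈ (Finset.range n).erase i, (h i j)^2 := by
          apply Finset.sum_le_sum_of_subset_of_nonneg
          · exact Finset.range_subset_range.2 (by omega)
          · intro i _ _; apply Finset.sum_nonneg; intro j _; positivity
  have hS1_nonneg : 0 ≤ S1 := by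
    apply Finset.sum_nonneg; intro i _; apply Finset.sum_nonneg; intro j _; positivity
  have hS2_nonneg : 0 ≤ S2 := by
    apply Finset.sum_nonneg; intro i _; positivity
  have t1 : 0 ≤ a * (On - Om) := mul_nonneg ha.le (by linarith)
  have t2 : 0 ≤ (a + b) * Om := mul_nonneg hab.le hOm_nonneg
  have t3 : 0 ≤ (1/2) * S1 := by linarith
  have t4 : 0 ≤ (r/((n:ℝ)*((n:ℝ)-1))) * S2 := mul_nonneg hd.le hS2_nonneg
  constructor
  · rw [ge_iff_le.symm] at *
    linarith [key, t1, t2, t3, t4]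
  · rw [key]
    constructor
    · intro h0
      have e1 : a * (On - Om) = 0 := by linarith
      have e2 : (a + b) * Om = 0 := by linarith
      have e4 : (r/((n:ℝ)*((n:ℝ)-1))) * S2 = 0 := by linarith
      have hOm0 : Om = 0 := by
        rcases mul_eq_zero.1 e2 with h' | h'
        · exact absurd h' (ne_of_gt hab)
        · exact h'
      have hOn0 : On = 0 := by
        rcases mul_eq_zero.1 e1 with h' | h'
        · exact absurd h' (ne_of_gt ha)
        · linarith
      have hS20 : S2 = 0 := by
        rcases mul_eq_zero.1 e4 with h' | h'
        · exact absurd h' (ne_of_gt hd)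
        · exact h'
      constructor
      · intro i hi j hj hij
        have houter := (Finset.sum_eq_zero_iff_of_nonneg
          (fun i _ => Finset.sum_nonneg (fun j _ => sq_nonneg (h i j)))).1 hOn0 i
          (Finset.mem_range.2 hi)
        have hinner := (Finset.sum_eq_zero_iff_of_nonneg
          (fun j _ => sq_nonneg (h i j))).1 houter j
          (Finset.mem_erase.2 ⟨hij.symm, Finset.mem_range.2 hj⟩)
        exact pow_eq_zero_iff (by norm_num) |>.1 hinner
      · intro i hi
        have := (Finset.sum_eq_zero_iff_of_nonneg
          (fun i _ => sq_nonneg _)).1 hS20 i (Finset.mem_range.2 hi)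
        have := pow_eq_zero_iff (two_ne_zero) |>.1 this
        linarith [this]
    · rintro ⟨hoff, hdiag⟩
      have hOn0 : On = 0 := by
        rw [hOn_def]
        apply Finset.sum_eq_zero; intro i hi
        apply Finset.sum_eq_zero; intro j hj
        rw [Finset.mem_erase] at hj
        rw [hoff i (Finset.mem_range.1 hi) j (Finset.mem_range.1 hj.2) (Ne.symm hj.1)]
        ring
      have hOm0 : Om = 0 := le_antisymm (by linarith) hOm_nonneg
      have hS20 : S2 = 0 := by
        rw [hS2_def]
        apply Finset.sum_eq_zero; intro i hi
        rw [hdiag i (Finset.mem_range.1 hi)]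
        ring
      have hS10 : S1 = 0 := by
        rw [hS1_def]
        apply Finset.sum_eq_zero; intro i hi
        apply Finset.sum_eq_zero; intro j hj
        have h1 := hdiag i (Finset.mem_range.1 hi)
        have h2 := hdiag j (Finset.mem_range.1 hj)
        have : k * h i i = k * h j j := by rw [hk_def] at *; linarith
        have := mul_left_cancel₀ (ne_of_gt hk0) this
        rw [this]; ring
      rw [hOn0, hOm0, hS10, hS20]; ring
end

section
/- Let n ≥ 2 and r > 0 with r ≠ n(n−1). The symmetric (n×n) matrix H₁ whose diagonal entries are 2(n+r)(n−1)/r − 2 for the first n−1 rows and 2r/n for the last row, and all off-diagonal entries equal to −2, is positive semidefinite; its eigenvalues are 0, 2(n³−n²+r²)/(rn), and 2(n+r)(n−1)/r with multiplicity n−2. -/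
/-!
Write `H₁ = diagonal c - 2 J`, with `J` the all-ones matrix, `c i = 2(n+r)(n-1)/r` for `i < n - 1`
and `c (n-1) = 2r/n + 2`. All `c i` are positive and `∑ i, 1 / c i = 1/2`, so by Cauchy–Schwarz
`2 (∑ x i)² ≤ 2 (∑ 1 / c i) (∑ c i x i²) = ∑ c i x i²`, which is positive semidefiniteness.
By the matrix determinant lemma the characteristic polynomial of `diagonal c - s J` is `P + s P'`
with `P = ∏ (X - c i)`; here `P = (X - a)^(n-1) (X - b)` and `P + 2 P'` factors explicitly.
-/

open Polynomial Matrix Finset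

section DiagonalSubConst

variable {ι : Type*} [Fintype ι] [DecidableEq ι]

theorem dotProduct_diagonal_sub_const_mulVec {R : Type*} [CommRing R] (c x : ι → R) (s : R) :
    x ⬝ᵥ ((diagonal c - of fun _ _ => s) *ᵥ x) = ∑ i, c i * x i ^ 2 - s * (∑ i, x i) ^ 2 := by
  have hconst : (of fun _ _ => s : Matrix ι ι R) *ᵥ x = fun _ => s * ∑ i, x i := by
    ext i; simp [mulVec, dotProduct, mul_sum]
  have hdiag : x ⬝ᵥ (diagonal c *ᵥ x) = ∑ i, c i * x i ^ 2 :=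
    sum_congr rfl fun i _ => by rw [mulVec_diagonal]; ring
  rw [sub_mulVec, dotProduct_sub, hdiag, hconst, dotProduct, ← sum_mul]
  ring

theorem posSemidef_diagonal_sub_const {c : ι → ℝ} (hc : ∀ i, 0 < c i) {s : ℝ}
    (hs : s * ∑ i, (c i)⁻¹ ≤ 1) : (diagonal c - of fun _ _ => s).PosSemidef := by
  refine posSemidef_iff_dotProduct_mulVec.2 ⟨?_, fun x => ?_⟩
  · ext i j
    by_cases h : i = j
    · subst h; simp
    · simp [conjTranspose_apply, h, Ne.symm h]
  rw [star_trivial, dotProduct_diagonal_sub_const_mulVec, sub_nonneg]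
  have hQ : 0 ≤ ∑ i, c i * x i ^ 2 := sum_nonneg fun i _ => by have := hc i; positivity
  have cauchySchwarz : (∑ i, x i) ^ 2 ≤ (∑ i, (c i)⁻¹) * ∑ i, c i * x i ^ 2 :=
    sum_sq_le_sum_mul_sum_of_sq_le_mul _ (fun i _ => (inv_pos.2 (hc i)).le)
      (fun i _ => mul_nonneg (hc i).le (sq_nonneg _))
      (fun i _ => by rw [inv_mul_cancel_left₀ (hc i).ne'])
  rcases le_or_gt s 0 with hs0 | hs0
  · nlinarith [sq_nonneg (∑ i, x i)]
  · nlinarith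

theorem det_diagonal_add_const {K : Type*} [Field K] {d : ι → K} (hd : ∀ i, d i ≠ 0) (t : K) :
    (diagonal d + of fun _ _ => t).det = ∏ i, d i + t * ∑ i, ∏ j ∈ univ.erase i, d j := by
  have hfactor : diagonal d + of (fun _ _ => t)
      = diagonal d * (1 + vecMulVec (fun i => (d i)⁻¹ * t) 1) := by
    ext i j
    simp [mul_add, diagonal_apply, hd, one_apply]
  rw [hfactor, det_mul, det_diagonal, vecMulVec_eq Unit, det_one_add_replicateCol_mul_replicateRow,
    dotProduct, mul_add, mul_one, mul_sum, mul_sum]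
  congr 1
  refine sum_congr rfl fun i _ => ?_
  rw [← prod_erase_mul _ _ (mem_univ i), Pi.one_apply, one_mul, mul_assoc,
    mul_inv_cancel_left₀ (hd i), mul_comm]

/-- The determinant formula is transported from the fraction field of `R[X]`, where the
diagonal entries `X - C (c i)` are invertible. -/
theorem charpoly_diagonal_sub_const {R : Type*} [CommRing R] [IsDomain R] (c : ι → R) (s : R) :
    (diagonal c - of fun _ _ => s).charpoly
      = ∏ i, (X - C (c i)) + C s * derivative (∏ i, (X - C (c i))) := by
  let φ := algebraMap R[X] (FractionRing R[X])
  apply IsFractionRing.injective R[X] (FractionRing R[X])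
  have hcharmatrix : (charmatrix (diagonal c - of fun _ _ => s)).map φ
      = diagonal (fun i => φ (X - C (c i))) + of fun _ _ => φ (C s) := by
    ext i j
    by_cases h : i = j
    · subst h
      simp only [map_apply, charmatrix_apply_eq, Matrix.sub_apply, diagonal_apply_eq, of_apply,
        map_sub, Matrix.add_apply]
      ring
    · simp [h]
  rw [charpoly, RingHom.map_det, RingHom.mapMatrix_apply, hcharmatrix,
    det_diagonal_add_const fun i =>
      (map_ne_zero_iff φ (IsFractionRing.injective _ _)).2 (X_sub_C_ne_zero _),
    derivative_prod_finset]
  simp [φ, map_sum, map_prod]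

end DiagonalSubConst

theorem add_C_mul_derivative_X_sub_C_pow_mul {R : Type*} [CommRing R] (a b s : R) (m : ℕ) :
    (X - C a) ^ (m + 1) * (X - C b) + C s * derivative ((X - C a) ^ (m + 1) * (X - C b))
      = (X - C a) ^ m
          * ((X - C a) * (X - C b) + C s * (C ((m : R) + 1) * (X - C b) + (X - C a))) := by
  rw [derivative_mul, derivative_pow, derivative_X_sub_C, derivative_X_sub_C, Nat.add_sub_cancel]
  push_cast
  ring

noncomputable def hessianDiag (n : ℕ) (r : ℝ) (i : Fin n) : ℝ :=
  if (i : ℕ) < n - 1 then 2 * ((n : ℝ) + r) * ((n : ℝ) - 1) / r else 2 * r / (n : ℝ) + 2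

section Hessian

variable {n : ℕ} {r : ℝ}

theorem hessian_eq_diagonal_sub_const :
    Matrix.of (fun i j : Fin n =>
        if i = j then
          (if (i : ℕ) < n - 1 then 2*((n : ℝ)+r)*((n : ℝ)-1)/r - 2 else 2*r/(n : ℝ))
        else (-2 : ℝ))
      = diagonal (hessianDiag n r) - of fun _ _ => 2 := by
  ext i j
  by_cases h : i = j
  · subst h
    by_cases hi : (i : ℕ) < n - 1 <;> simp [hessianDiag, hi]
  · simp [h]

theorem hessianDiag_pos (hn : 2 ≤ n) (hr : 0 < r) (i : Fin n) : 0 < hessianDiag n r i := by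
  have hn' : (2 : ℝ) ≤ n := by exact_mod_cast hn
  unfold hessianDiag
  split_ifs
  · exact div_pos (by nlinarith) hr
  · positivity

theorem sum_inv_hessianDiag (hn : 2 ≤ n) (hr : 0 < r) : ∑ i, (hessianDiag n r i)⁻¹ = 1 / 2 := by
  obtain ⟨m, rfl⟩ : ∃ m, n = m + 1 := ⟨n - 1, by omega⟩
  have hm : (1 : ℝ) ≤ m := by exact_mod_cast (by omega : 1 ≤ m)
  rw [Fin.sum_univ_castSucc]
  simp only [hessianDiag, Fin.val_castSucc, add_tsub_cancel_right, Fin.is_lt, ↓reduceIte,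
    Nat.cast_add, Nat.cast_one, inv_div, sum_const, card_univ,
    Fintype.card_fin, nsmul_eq_mul, Fin.val_last, lt_self_iff_false]
  field_simp
  ring

theorem prod_X_sub_C_hessianDiag (hn : 1 ≤ n) :
    ∏ i, (X - C (hessianDiag n r i))
      = (X - C (2 * ((n : ℝ) + r) * ((n : ℝ) - 1) / r)) ^ (n - 1)
          * (X - C (2 * r / (n : ℝ) + 2)) := by
  obtain ⟨m, rfl⟩ : ∃ m, n = m + 1 := ⟨n - 1, by omega⟩
  rw [Fin.prod_univ_castSucc]
  simp [hessianDiag]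

theorem hessian_quadratic_factor (hn : n ≠ 0) (hr : r ≠ 0) :
    (X - C (2 * ((n : ℝ) + r) * ((n : ℝ) - 1) / r)) * (X - C (2 * r / (n : ℝ) + 2))
        + C 2 * (C ((n : ℝ) - 1) * (X - C (2 * r / (n : ℝ) + 2))
          + (X - C (2 * ((n : ℝ) + r) * ((n : ℝ) - 1) / r)))
      = X * (X - C (2 * ((n : ℝ) ^ 3 - (n : ℝ) ^ 2 + r ^ 2) / (r * (n : ℝ)))) := by
  have hsum : 2 * ((n : ℝ) + r) * ((n : ℝ) - 1) / r + (2 * r / n + 2) - 2 * ((n : ℝ) - 1) - 2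
      = 2 * ((n : ℝ) ^ 3 - (n : ℝ) ^ 2 + r ^ 2) / (r * (n : ℝ)) := by
    field_simp; ring
  have hprod : 2 * ((n : ℝ) + r) * ((n : ℝ) - 1) / r * (2 * r / n + 2)
      - 2 * ((n : ℝ) - 1) * (2 * r / n + 2) - 2 * (2 * ((n : ℝ) + r) * ((n : ℝ) - 1) / r) = 0 := by
    field_simp; ring
  rw [← hsum]
  generalize 2 * ((n : ℝ) + r) * ((n : ℝ) - 1) / r = a at hprod ⊢
  generalize 2 * r / (n : ℝ) + 2 = b at hprod ⊢
  have hC := congrArg C hprod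
  simp only [map_sub, map_add, map_mul, map_zero] at hC ⊢
  linear_combination hC

end Hessian

theorem stmt2_general (n : ℕ) (hn : 2 ≤ n) (r : ℝ) (hr : 0 < r) :
    (Matrix.of (fun i j : Fin n =>
        if i = j then
          (if (i : ℕ) < n - 1 then 2*((n : ℝ)+r)*((n : ℝ)-1)/r - 2 else 2*r/(n : ℝ))
        else (-2 : ℝ))).PosSemidef
    ∧ (Matrix.of (fun i j : Fin n =>
        if i = j then
          (if (i : ℕ) < n - 1 then 2*((n : ℝ)+r)*((n : ℝ)-1)/r - 2 else 2*r/(n : ℝ))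
        else (-2 : ℝ))).charpoly
      = X * (X - C (2*((n : ℝ)^3 - (n : ℝ)^2 + r^2)/(r*(n : ℝ))))
          * (X - C (2*((n : ℝ)+r)*((n : ℝ)-1)/r))^(n-2) := by
  rw [hessian_eq_diagonal_sub_const]
  refine ⟨posSemidef_diagonal_sub_const (hessianDiag_pos hn hr)
    (by rw [sum_inv_hessianDiag hn hr]; norm_num), ?_⟩
  obtain ⟨k, rfl⟩ : ∃ k, n = k + 2 := ⟨n - 2, by omega⟩
  have hk : (k : ℝ) + 1 = ((k + 2 : ℕ) : ℝ) - 1 := by push_cast; ring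
  rw [charpoly_diagonal_sub_const, prod_X_sub_C_hessianDiag (by omega),
    show k + 2 - 1 = k + 1 from rfl, add_C_mul_derivative_X_sub_C_pow_mul, hk,
    hessian_quadratic_factor (by omega) hr.ne', Nat.add_sub_cancel, mul_comm]

/-- the Hessian block H₁ is positive semidefinite, with eigenvalues
`0`, `2(n³−n²+r²)/(rn)` and `2(n+r)(n−1)/r` (the latter of multiplicity n−2),
expressed via its characteristic polynomial. -/
theorem stmt2 (n : ℕ) (hn : 2 ≤ n) (r : ℝ) (hr : 0 < r)
    (hrn : r ≠ (n : ℝ)*((n : ℝ)-1)) :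
    (Matrix.of (fun i j : Fin n =>
        if i = j then
          (if (i : ℕ) < n - 1 then 2*((n : ℝ)+r)*((n : ℝ)-1)/r - 2 else 2*r/(n : ℝ))
        else (-2 : ℝ))).PosSemidef
    ∧ (Matrix.of (fun i j : Fin n =>
        if i = j then
          (if (i : ℕ) < n - 1 then 2*((n : ℝ)+r)*((n : ℝ)-1)/r - 2 else 2*r/(n : ℝ))
        else (-2 : ℝ))).charpoly
      = X * (X - C (2*((n : ℝ)^3 - (n : ℝ)^2 + r^2)/(r*(n : ℝ))))
          * (X - C (2*((n : ℝ)+r)*((n : ℝ)-1)/r))^(n-2) :=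
  stmt2_general n hn r hr
end

section
/- Let n ≥ 2, 0 < r < n(n−1), and suppose a symmetric matrix (h_{ij}^α)_{i,j=1}^n (for each α in a finite index set) satisfies the equality 2τ = r𝒞 + ((n−1)(n+r)(n²−n−r)/(rn))·𝒞(L₀) + C₀ in the inequality derived from 𝒫 ≥ 0, where L₀ realizes the infimum of 𝒞(L). Then h_{ij}^α = 0 for all i ≠ j and h_{nn}^α = (n(n−1)/r)·h_{11}^α = ... = (n(n−1)/r)·h_{n−1,n−1}^α for all α; i.e. equality holds iff the submanifold is invariantly quasi-umbilical with trivial normal connection and shape operators A_{n+1} = diag(a,...,a, n(n−1)a/r), A_{n+2} = ... = A_{4m} = 0. -/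
/-!
Write `n = m + 1` and `S = h₁₁ + ⋯ + h_mm`. Besides the off-diagonal squares, which 𝒫 weighs with
positive coefficients, its diagonal part is the sum of squares
`((n + r) m / r) · ∑_{i ≤ m} (hᵢᵢ - S / m)² + (n / r) · (S - (r / n) hₙₙ)²`.
For `0 < r < n (n - 1)` every coefficient is positive, so `𝒫 ≥ 0`, and `𝒫 = 0` exactly when all
off-diagonal entries vanish, `h₁₁ = ⋯ = h_mm = S / m` and `S = (r / n) hₙₙ`.
-/

open Finset

theorem sum_sq_eq_sq_sum_div_card_add_sum_sub_mean_sq {ι : Type*} (s : Finset ι) (a : ι → ℝ) :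
    ∑ i ∈ s, a i ^ 2 = (∑ i ∈ s, a i) ^ 2 / #s + ∑ i ∈ s, (a i - (∑ j ∈ s, a j) / #s) ^ 2 := by
  rcases s.eq_empty_or_nonempty with rfl | hs
  · simp
  have hcard : (#s : ℝ) ≠ 0 := by exact_mod_cast hs.card_pos.ne'
  simp only [sub_sq, sum_add_distrib, sum_sub_distrib, ← sum_mul, ← mul_sum, sum_const,
    nsmul_eq_mul]
  field_simp
  ring

theorem sum_sub_mean_sq_eq_zero_iff {ι : Type*} (s : Finset ι) (a : ι → ℝ) :
    ∑ i ∈ s, (a i - (∑ j ∈ s, a j) / #s) ^ 2 = 0 ↔ ∀ i ∈ s, a i = (∑ j ∈ s, a j) / #s := by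
  simp only [sum_eq_zero_iff_of_nonneg fun _ _ => sq_nonneg _, pow_eq_zero_iff two_ne_zero,
    sub_eq_zero]

noncomputable def offDiagSqSum (k : ℕ) (f : ℕ → ℕ → ℝ) : ℝ :=
  ∑ i ∈ range k, ∑ j ∈ (range k).erase i, f i j ^ 2

theorem offDiagSqSum_nonneg (k : ℕ) (f : ℕ → ℕ → ℝ) : 0 ≤ offDiagSqSum k f :=
  sum_nonneg fun _ _ => sum_nonneg fun _ _ => sq_nonneg _

theorem offDiagSqSum_eq_zero_iff (k : ℕ) (f : ℕ → ℕ → ℝ) :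
    offDiagSqSum k f = 0 ↔ ∀ i < k, ∀ j < k, i ≠ j → f i j = 0 := by
  simp only [offDiagSqSum,
    sum_eq_zero_iff_of_nonneg fun _ _ => sum_nonneg fun _ _ => sq_nonneg _,
    sum_eq_zero_iff_of_nonneg fun _ _ => sq_nonneg _, mem_range, mem_erase,
    pow_eq_zero_iff two_ne_zero]
  grind

theorem sum_range_sum_range_sq (k : ℕ) (f : ℕ → ℕ → ℝ) :
    ∑ i ∈ range k, ∑ j ∈ range k, f i j ^ 2 = ∑ i ∈ range k, f i i ^ 2 + offDiagSqSum k f := by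
  rw [offDiagSqSum, ← sum_add_distrib]
  exact sum_congr rfl fun i hi => (add_sum_erase _ _ hi).symm

/-- The polynomial 𝒫 of one normal direction, with `f i j` standing for `h_{i+1, j+1}`. -/
noncomputable def casoratiPoly (n : ℕ) (r : ℝ) (f : ℕ → ℕ → ℝ) : ℝ :=
  ((n + r) / n) * ∑ i ∈ range n, ∑ j ∈ range n, f i j ^ 2
    + ((n + r) * (n ^ 2 - n - r) / (r * n)) *
        ∑ i ∈ range (n - 1), ∑ j ∈ range (n - 1), f i j ^ 2
    - (∑ i ∈ range n, f i i) ^ 2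

theorem casoratiPoly_succ_eq {m : ℕ} (hm : m ≠ 0) {r : ℝ} (hr : r ≠ 0) (f : ℕ → ℕ → ℝ) :
    casoratiPoly (m + 1) r f =
      ((m + 1 + r) / (m + 1)) * offDiagSqSum (m + 1) f
        + ((m + 1 + r) * ((m + 1) * m - r) / (r * (m + 1))) * offDiagSqSum m f
        + ((m + 1 + r) * m / r) * ∑ i ∈ range m, (f i i - (∑ j ∈ range m, f j j) / m) ^ 2
        + ((m + 1) / r) * ((∑ i ∈ range m, f i i) - r / (m + 1) * f m m) ^ 2 := by
  have hdiag := sum_sq_eq_sq_sum_div_card_add_sum_sub_mean_sq (range m) (fun i => f i i)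
  simp only [card_range] at hdiag
  rw [casoratiPoly, Nat.add_sub_cancel, sum_range_sum_range_sq, sum_range_sum_range_sq,
    sum_range_succ (fun i => f i i), sum_range_succ (fun i => f i i ^ 2), hdiag]
  have : (m : ℝ) ≠ 0 := by exact_mod_cast hm
  push_cast
  field_simp
  ring

theorem two_le_of_pos_of_lt_mul_sub_one {n : ℕ} {r : ℝ} (hr0 : 0 < r) (hrn : r < n * (n - 1)) :
    2 ≤ n := by
  by_contra! hn
  interval_cases n <;> norm_num at hrn <;> linarith

theorem mean_eq_and_sum_eq_iff {m : ℕ} (hm : m ≠ 0) {r : ℝ} (hr : r ≠ 0) (a : ℕ → ℝ) (b : ℝ) :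
    ((∀ i ∈ range m, a i = (∑ j ∈ range m, a j) / m) ∧ ∑ i ∈ range m, a i = r / (m + 1) * b) ↔
      ∀ i < m, b = ((m + 1) * m / r) * a i := by
  have hm' : (m : ℝ) ≠ 0 := by exact_mod_cast hm
  have hm1 : (m : ℝ) + 1 ≠ 0 := by positivity
  constructor
  · rintro ⟨hmean, hsum⟩ i hi
    rw [hmean i (mem_range.mpr hi), hsum]
    field_simp
  · intro h
    have ha : ∀ i ∈ range m, a i = r / ((m + 1) * m) * b := fun i hi => by
      rw [h i (mem_range.mp hi)]
      field_simp
    have hsum : ∑ i ∈ range m, a i = r / (m + 1) * b := by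
      rw [sum_congr rfl ha, sum_const, card_range, nsmul_eq_mul]
      field_simp
    refine ⟨fun i hi => ?_, hsum⟩
    rw [hsum, ha i hi]
    field_simp

theorem casoratiPoly_succ_nonneg_and_eq_zero_iff {m : ℕ} (hm : m ≠ 0) {r : ℝ} (hr0 : 0 < r)
    (hrm : r < (m + 1) * m) (f : ℕ → ℕ → ℝ) :
    0 ≤ casoratiPoly (m + 1) r f ∧ (casoratiPoly (m + 1) r f = 0 ↔
      (∀ i < m + 1, ∀ j < m + 1, i ≠ j → f i j = 0) ∧ ∀ i < m, f m m = ((m + 1) * m / r) * f i i) := by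
  have hc : (0 : ℝ) < (m + 1 + r) / (m + 1) := by positivity
  have hd : (0 : ℝ) < (m + 1 + r) * ((m + 1) * m - r) / (r * (m + 1)) :=
    div_pos (mul_pos (by positivity) (by linarith)) (by positivity)
  have he : (0 : ℝ) < (m + 1 + r) * m / r := by positivity
  have hg : (0 : ℝ) < (m + 1) / r := by positivity
  have hA := mul_nonneg hc.le (offDiagSqSum_nonneg (m + 1) f)
  have hB := mul_nonneg hd.le (offDiagSqSum_nonneg m f)
  have hC := mul_nonneg he.le
    (sum_nonneg fun i (_ : i ∈ range m) => sq_nonneg (f i i - (∑ j ∈ range m, f j j) / m))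
  have hD := mul_nonneg hg.le (sq_nonneg ((∑ i ∈ range m, f i i) - r / (m + 1) * f m m))
  rw [casoratiPoly_succ_eq hm hr0.ne']
  refine ⟨by linarith, ?_⟩
  have hmean := sum_sub_mean_sq_eq_zero_iff (range m) (fun i => f i i)
  rw [card_range] at hmean
  rw [add_eq_zero_iff_of_nonneg (by linarith) hD, add_eq_zero_iff_of_nonneg (by linarith) hC,
    add_eq_zero_iff_of_nonneg hA hB, mul_eq_zero_iff_left hc.ne', mul_eq_zero_iff_left hd.ne',
    mul_eq_zero_iff_left he.ne', mul_eq_zero_iff_left hg.ne', hmean, pow_eq_zero_iff two_ne_zero,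
    sub_eq_zero, and_assoc, mean_eq_and_sum_eq_iff hm hr0.ne', offDiagSqSum_eq_zero_iff,
    offDiagSqSum_eq_zero_iff]
  refine and_congr_left' (and_iff_left_of_imp ?_)
  exact fun hoff i hi j hj => hoff i (by omega) j (by omega)

theorem stmt9_general (n : ℕ) (r : ℝ) (hr0 : 0 < r)
    (hrn : r < (n : ℝ)*((n : ℝ)-1)) (q : ℕ) (h : Fin q → ℕ → ℕ → ℝ) :
    (∑ α : Fin q,
        ((((n : ℝ)+r)/(n : ℝ)) * ∑ i ∈ Finset.range n, ∑ j ∈ Finset.range n, (h α i j)^2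
          + (((n : ℝ)+r)*((n : ℝ)^2 - (n : ℝ) - r)/(r*(n : ℝ))) *
              ∑ i ∈ Finset.range (n-1), ∑ j ∈ Finset.range (n-1), (h α i j)^2
          - (∑ i ∈ Finset.range n, h α i i)^2) = 0)
    ↔ ∀ α : Fin q, (∀ i < n, ∀ j < n, i ≠ j → h α i j = 0)
        ∧ ∀ i < n - 1, h α (n-1) (n-1) = ((n : ℝ)*((n : ℝ)-1)/r) * h α i i := by
  change ∑ α, casoratiPoly n r (h α) = 0 ↔ _
  have hn := two_le_of_pos_of_lt_mul_sub_one hr0 hrn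
  obtain ⟨m, rfl⟩ : ∃ m, n = m + 1 := ⟨n - 1, by omega⟩
  have hm : m ≠ 0 := by omega
  simp only [Nat.cast_add, Nat.cast_one, add_sub_cancel_right, Nat.add_sub_cancel] at hrn ⊢
  have key := casoratiPoly_succ_nonneg_and_eq_zero_iff hm hr0 hrn
  rw [sum_eq_zero_iff_of_nonneg fun α _ => (key (h α)).1]
  simp only [mem_univ, true_imp_iff, key]

/-- equality case of the generalized Casorati inequality, algebraic
content: with `0 < r < n(n−1)`, the sum over all normal directions `α` of the
quadratic polynomials 𝒫 vanishes (i.e. equality holds in the derived inequality,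
the infimum of 𝒞(L) being attained) if and only if for every `α` all off-diagonal
components vanish and `h_{nn}^α = (n(n−1)/r)·h_{ii}^α` for `i = 1,...,n−1`; this
is exactly the invariantly quasi-umbilical shape-operator form
`A = diag(a,...,a, n(n−1)a/r)` in each normal direction. -/
theorem stmt9 (n : ℕ) (hn : 2 ≤ n) (r : ℝ) (hr0 : 0 < r)
    (hrn : r < (n : ℝ)*((n : ℝ)-1)) (q : ℕ) (h : Fin q → ℕ → ℕ → ℝ)
    (hsymm : ∀ α i j, h α i j = h α j i) :
    (∑ α : Fin q,
        ((((n : ℝ)+r)/(n : ℝ)) * ∑ i ∈ Finset.range n, ∑ j ∈ Finset.range n, (h α i j)^2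
          + (((n : ℝ)+r)*((n : ℝ)^2 - (n : ℝ) - r)/(r*(n : ℝ))) *
              ∑ i ∈ Finset.range (n-1), ∑ j ∈ Finset.range (n-1), (h α i j)^2
          - (∑ i ∈ Finset.range n, h α i i)^2) = 0)
    ↔ ∀ α : Fin q, (∀ i < n, ∀ j < n, i ≠ j → h α i j = 0)
        ∧ ∀ i < n - 1, h α (n-1) (n-1) = ((n : ℝ)*((n : ℝ)-1)/r) * h α i i :=
  stmt9_general n r hr0 hrn q h
end

section
/- Let n ≥ 2 and r > 0. For the quadratic form Q on symmetric n×n matrices given by Q(h) = ((n+r)/n)·∑_{i,j} h_{ij}² + ((n+r)(n²−n−r)/(rn))·∑_{i,j≤n−1} h_{ij}² − (tr h)², the minimum value of Q is 0 and the kernel of Q (the set where Q vanishes) is the one-dimensional subspace of diagonal matrices diag(a,...,a, n(n−1)a/r). -/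
open Finset

/-! With weights `w i j` equal to `(n+r)(n-1)/r` on the leading `(n-1)×(n-1)` block and `(n+r)/n`
elsewhere, `Q h = ∑ w i j * h i j ^ 2 - (tr h)^2`. The diagonal weights satisfy `∑ 1 / w i i = 1`,
so completing the square gives `Q h = ∑ w i j * (h - D) i j ^ 2` with `D = diag (tr h / w i i)`.
Hence `Q ≥ 0`, and `Q h = 0` exactly when `h = D`, i.e. on the line of diagonal matrices
`diag (c / w i i)`. -/

namespace Matrix

variable {ι : Type*} [Fintype ι] {w : Matrix ι ι ℝ}

def weightedForm (w h : Matrix ι ι ℝ) : ℝ :=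
  ∑ i, ∑ j, w i j * h i j ^ 2 - h.trace ^ 2

theorem weightedForm_eq_sum_sub_diagonal [DecidableEq ι] (hw : ∀ i, w i i ≠ 0)
    (hsum : ∑ i, (w i i)⁻¹ = 1) (h : Matrix ι ι ℝ) :
    weightedForm w h =
      ∑ i, ∑ j, w i j * (h - diagonal fun k => h.trace / w k k) i j ^ 2 := by
  set t := h.trace
  have row : ∀ i, ∑ j, w i j * (h - diagonal fun k => t / w k k) i j ^ 2 =
      ∑ j, w i j * h i j ^ 2 - 2 * t * h i i + t ^ 2 * (w i i)⁻¹ := by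
    intro i
    have term : ∀ j, w i j * (h - diagonal fun k => t / w k k) i j ^ 2 =
        w i j * h i j ^ 2 - if i = j then 2 * t * h i i - t ^ 2 * (w i i)⁻¹ else 0 := by
      intro j
      rw [sub_apply, diagonal_apply]
      split_ifs with hij
      · subst hij; field_simp [hw i]; ring
      · ring
    simp only [term, sum_sub_distrib, sum_ite_eq, mem_univ, if_true]
    ring
  have ht : t = ∑ i, h i i := rfl
  rw [weightedForm, sum_congr rfl fun i _ => row i, sum_add_distrib, sum_sub_distrib,
    ← mul_sum, ← mul_sum, hsum, ← ht]
  ring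

theorem weightedForm_nonneg (hw : ∀ i j, 0 < w i j) (hsum : ∑ i, (w i i)⁻¹ = 1)
    (h : Matrix ι ι ℝ) : 0 ≤ weightedForm w h := by
  classical
  rw [weightedForm_eq_sum_sub_diagonal (fun i => (hw i i).ne') hsum]
  exact sum_nonneg fun i _ => sum_nonneg fun j _ => mul_nonneg (hw i j).le (sq_nonneg _)

theorem weightedForm_eq_zero_iff [DecidableEq ι] (hw : ∀ i j, 0 < w i j) (hsum : ∑ i, (w i i)⁻¹ = 1)
    (h : Matrix ι ι ℝ) :
    weightedForm w h = 0 ↔ ∃ c : ℝ, h = diagonal fun i => c / w i i := by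
  have hw' : ∀ i, w i i ≠ 0 := fun i => (hw i i).ne'
  rw [weightedForm_eq_sum_sub_diagonal hw' hsum]
  constructor
  · intro h0
    refine ⟨h.trace, sub_eq_zero.mp (ext fun i j => ?_)⟩
    have hterm : ∀ i j, 0 ≤ w i j * (h - diagonal fun k => h.trace / w k k) i j ^ 2 :=
      fun i j => mul_nonneg (hw i j).le (sq_nonneg _)
    have hrow := (Fintype.sum_eq_zero_iff_of_nonneg fun i =>
      sum_nonneg fun j _ => hterm i j).mp h0
    have hij := (Fintype.sum_eq_zero_iff_of_nonneg (hterm i)).mp (congrFun hrow i)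
    simpa [(hw i j).ne'] using congrFun hij j
  · rintro ⟨c, rfl⟩
    have htrace : (diagonal fun i => c / w i i).trace = c := by
      simp_rw [trace_diagonal, div_eq_mul_inv, ← mul_sum, hsum, mul_one]
    simp [htrace]

end Matrix

open Matrix

theorem Fin.sum_ite_lt_pred {n : ℕ} (hn : n ≠ 0) (a b : ℝ) :
    ∑ i : Fin n, (if (i : ℕ) < n - 1 then a else b) = (n - 1 : ℝ) * a + b := by
  obtain ⟨m, rfl⟩ := Nat.exists_eq_succ_of_ne_zero hn
  simp [Fin.sum_univ_castSucc]

noncomputable def casoratiWeight (n : ℕ) (r : ℝ) : Matrix (Fin n) (Fin n) ℝ :=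
  of fun i j => if (i : ℕ) < n - 1 ∧ (j : ℕ) < n - 1 then (n + r) * (n - 1) / r else (n + r) / n

section

variable {n : ℕ} {r : ℝ}

theorem casoratiWeight_pos (hn : 2 ≤ n) (hr : 0 < r) (i j : Fin n) :
    0 < casoratiWeight n r i j := by
  have hn1 : (1 : ℝ) < n := by exact_mod_cast hn
  have : (0 : ℝ) < n - 1 := by linarith
  rw [casoratiWeight, of_apply]
  split_ifs <;> positivity

theorem sum_inv_casoratiWeight_diag (hn : 2 ≤ n) (hr : 0 < r) :
    ∑ i, (casoratiWeight n r i i)⁻¹ = 1 := by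
  have hn1 : (1 : ℝ) < n := by exact_mod_cast hn
  simp only [casoratiWeight, of_apply, and_self, apply_ite Inv.inv]
  rw [Fin.sum_ite_lt_pred (by omega)]
  have : (n : ℝ) - 1 ≠ 0 := by linarith
  field_simp
  ring

theorem casoratiForm_eq_weightedForm (hn : n ≠ 0) (hr : r ≠ 0) (h : Matrix (Fin n) (Fin n) ℝ) :
    (((n : ℝ)+r)/(n : ℝ)) * ∑ i : Fin n, ∑ j : Fin n, (h i j)^2
        + (((n : ℝ)+r)*((n : ℝ)^2 - (n : ℝ) - r)/(r*(n : ℝ))) *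
            ∑ i : Fin n, ∑ j : Fin n,
              (if (i : ℕ) < n - 1 ∧ (j : ℕ) < n - 1 then (h i j)^2 else 0)
        - (Matrix.trace h)^2 = weightedForm (casoratiWeight n r) h := by
  have hn' : (n : ℝ) ≠ 0 := by exact_mod_cast hn
  simp only [weightedForm, casoratiWeight, of_apply, mul_sum, ← sum_add_distrib]
  congr 1
  refine sum_congr rfl fun i _ => sum_congr rfl fun j _ => ?_
  split_ifs
  · field_simp; ring
  · ring

theorem div_casoratiWeight_diag (hn : 2 ≤ n) (hr : 0 < r) (a : ℝ) :
    (fun i => a * ((n + r) * (n - 1) / r) / casoratiWeight n r i i) =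
      fun i : Fin n => if (i : ℕ) < n - 1 then a else (n : ℝ) * ((n : ℝ) - 1) * a / r := by
  have hn1 : (1 : ℝ) < n := by exact_mod_cast hn
  have : (n : ℝ) - 1 ≠ 0 := by linarith
  have : (n : ℝ) + r ≠ 0 := by linarith
  have : (n : ℝ) ≠ 0 := by linarith
  ext i
  simp only [casoratiWeight, of_apply, and_self]
  split_ifs
  · field_simp
  · field_simp

end

/-- the quadratic form `Q` on symmetric n×n matrices has minimum
value 0, attained exactly on the line of diagonal matrices
`diag(a,...,a, n(n−1)a/r)`. -/
theorem stmt17 (n : ℕ) (hn : 2 ≤ n) (r : ℝ) (hr : 0 < r) :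
    (∀ h : Matrix (Fin n) (Fin n) ℝ, h.IsSymm →
      0 ≤ (((n : ℝ)+r)/(n : ℝ)) * ∑ i : Fin n, ∑ j : Fin n, (h i j)^2
        + (((n : ℝ)+r)*((n : ℝ)^2 - (n : ℝ) - r)/(r*(n : ℝ))) *
            ∑ i : Fin n, ∑ j : Fin n,
              (if (i : ℕ) < n - 1 ∧ (j : ℕ) < n - 1 then (h i j)^2 else 0)
        - (Matrix.trace h)^2)
    ∧ {h : Matrix (Fin n) (Fin n) ℝ | h.IsSymm ∧
        (((n : ℝ)+r)/(n : ℝ)) * ∑ i : Fin n, ∑ j : Fin n, (h i j)^2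
          + (((n : ℝ)+r)*((n : ℝ)^2 - (n : ℝ) - r)/(r*(n : ℝ))) *
              ∑ i : Fin n, ∑ j : Fin n,
                (if (i : ℕ) < n - 1 ∧ (j : ℕ) < n - 1 then (h i j)^2 else 0)
          - (Matrix.trace h)^2 = 0}
      = {h : Matrix (Fin n) (Fin n) ℝ | ∃ a : ℝ,
          h = Matrix.diagonal (fun i : Fin n =>
            if (i : ℕ) < n - 1 then a else (n : ℝ)*((n : ℝ)-1)*a/r)} := by
  have hw := casoratiWeight_pos hn hr
  have hsum := sum_inv_casoratiWeight_diag hn hr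
  simp only [casoratiForm_eq_weightedForm (by omega : n ≠ 0) hr.ne',
    weightedForm_eq_zero_iff hw hsum]
  refine ⟨fun h _ => weightedForm_nonneg hw hsum h, Set.ext fun h => ⟨?_, ?_⟩⟩
  · rintro ⟨-, c, rfl⟩
    have hW : ((n : ℝ) + r) * (n - 1) / r ≠ 0 := by
      have : (1 : ℝ) < n := by exact_mod_cast hn
      have : (0 : ℝ) < n - 1 := by linarith
      positivity
    exact ⟨c / (((n : ℝ) + r) * (n - 1) / r),
      by rw [← div_casoratiWeight_diag hn hr, div_mul_cancel₀ _ hW]⟩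
  · rintro ⟨a, rfl⟩
    exact ⟨isSymm_diagonal _, _, congrArg diagonal (div_casoratiWeight_diag hn hr a).symm⟩
end
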